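/- arXiv:1902.11198 — 11 statements merged into one kernel-verified Lean document; each statement's English description precedes it below -/
import Mathlib

section
/- For natural numbers i ≥ j ≥ m ≥ 1, we have 2^i ≡ 2^j (mod 10^m) if and only if i ≡ j (mod 4·5^(m-1)). -/
/-!
Since `2 ^ m` divides both `2 ^ i` and `2 ^ j`, the congruence modulo `10 ^ m = 2 ^ m * 5 ^ m`
reduces to `2 ^ (i - j) ≡ 1 [MOD 5 ^ m]`. Modulo `5` the order of `2` is `4`, and lifting the
exponent gives `v₅(16 ^ q - 1) = v₅(15) + v₅(q) = 1 + v₅(q)`, so `2` has order `4 * 5 ^ (m - 1)`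
modulo `5 ^ m`.
-/

lemma orderOf_two_zmod_five : orderOf (2 : ZMod 5) = 4 := by
  simpa using orderOf_eq_prime_pow (p := 2) (n := 1) (x := (2 : ZMod 5)) (by decide) (by decide)

lemma four_dvd_of_two_pow_modEq_one {n : ℕ} (h : 2 ^ n ≡ 1 [MOD 5]) : 4 ∣ n := by
  have h' : (2 : ZMod 5) ^ n = 1 := by exact_mod_cast (ZMod.natCast_eq_natCast_iff _ _ _).2 h
  exact orderOf_two_zmod_five ▸ orderOf_dvd_of_pow_eq_one h'

lemma sixteen_pow_modEq_one_iff (k q : ℕ) : 16 ^ q ≡ 1 [MOD 5 ^ (k + 1)] ↔ 5 ^ k ∣ q := by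
  rcases Nat.eq_zero_or_pos q with rfl | hq
  · simp [Nat.ModEq.refl]
  have : Fact (Nat.Prime 5) := ⟨Nat.prime_five⟩
  have hv : padicValNat 5 (16 ^ q - 1) = 1 + padicValNat 5 q := by
    have hlte := padicValNat.pow_sub_pow (p := 5) (x := 16) (y := 1) (by decide) (by norm_num)
      (by norm_num) (by norm_num) hq.ne'
    rw [one_pow] at hlte
    rw [hlte, show 16 - 1 = 5 * 3 from rfl, padicValNat.mul (by norm_num) (by norm_num),
      padicValNat_self, padicValNat.eq_zero_of_not_dvd (by norm_num)]
  have hne : 16 ^ q - 1 ≠ 0 := Nat.sub_ne_zero_of_lt (Nat.one_lt_pow hq.ne' (by norm_num))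
  rw [Nat.ModEq.comm, Nat.modEq_iff_dvd' (Nat.one_le_pow _ _ (by norm_num)),
    padicValNat_dvd_iff_le hne,
    padicValNat_dvd_iff_le hq.ne', hv]
  omega

theorem two_pow_modEq_one_iff (k n : ℕ) : 2 ^ n ≡ 1 [MOD 5 ^ (k + 1)] ↔ 4 * 5 ^ k ∣ n := by
  by_cases h4 : 4 ∣ n
  · obtain ⟨q, rfl⟩ := h4
    rw [pow_mul, Nat.mul_dvd_mul_iff_left (by norm_num)]
    exact sixteen_pow_modEq_one_iff k q
  · refine iff_of_false (fun h => h4 ?_) (fun h => h4 (dvd_of_mul_right_dvd h))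
    exact four_dvd_of_two_pow_modEq_one (h.of_dvd (dvd_pow_self 5 k.succ_ne_zero))

lemma two_pow_add_modEq_two_pow_iff {m j : ℕ} (hmj : m ≤ j) (n : ℕ) :
    2 ^ (j + n) ≡ 2 ^ j [MOD 10 ^ m] ↔ 2 ^ n ≡ 1 [MOD 5 ^ m] := by
  have hcop : Nat.Coprime (2 ^ m) (5 ^ m) := Nat.Coprime.pow _ _ (by norm_num)
  have hmod2 : 2 ^ (j + n) ≡ 2 ^ j [MOD 2 ^ m] :=
    (Nat.modEq_zero_iff_dvd.2 (pow_dvd_pow 2 (hmj.trans le_self_add))).trans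
      (Nat.modEq_zero_iff_dvd.2 (pow_dvd_pow 2 hmj)).symm
  have hgcd : Nat.gcd (5 ^ m) (2 ^ j) = 1 := Nat.Coprime.pow _ _ (by norm_num)
  rw [show 10 ^ m = 2 ^ m * 5 ^ m by rw [← mul_pow]; norm_num,
    ← Nat.modEq_and_modEq_iff_modEq_mul hcop, and_iff_right hmod2, pow_add]
  constructor
  · intro h
    exact Nat.ModEq.cancel_left_of_coprime hgcd (by rwa [mul_one])
  · intro h
    simpa using h.mul_left (2 ^ j)

theorem stmt_0 (i j m : ℕ) (hm : 1 ≤ m) (hmj : m ≤ j) (hji : j ≤ i) :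
    2 ^ i ≡ 2 ^ j [MOD 10 ^ m] ↔ i ≡ j [MOD 4 * 5 ^ (m - 1)] := by
  obtain ⟨k, rfl⟩ : ∃ k, m = k + 1 := ⟨m - 1, by omega⟩
  obtain ⟨n, rfl⟩ : ∃ n, i = j + n := ⟨i - j, by omega⟩
  rw [two_pow_add_modEq_two_pow_iff hmj, two_pow_modEq_one_iff, Nat.add_sub_cancel,
    Nat.add_modEq_left_iff]
end

section
/- Let i > m ≥ 1 and suppose 2^i ≡ x (mod 10^m) with 0 ≤ x < 10^m. For each j, define a_j by 2^(i + 4·j·5^(m-1)) ≡ x + a_j·10^m (mod 10^(m+1)) with 0 ≤ a_j ≤ 9. Then each a_j has the same parity as x/2^m, i.e., a_j ≡ x/2^m (mod 2) (where 2^m divides x). -/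
theorem stmt_2 (i m x : ℕ) (hm : 1 ≤ m) (him : m < i) (hx : x < 10 ^ m)
    (hxc : 2 ^ i ≡ x [MOD 10 ^ m])
    (j a : ℕ) (ha : a ≤ 9)
    (haj : 2 ^ (i + 4 * j * 5 ^ (m - 1)) ≡ x + a * 10 ^ m [MOD 10 ^ (m + 1)]) :
    2 ^ m ∣ x ∧ a % 2 = (x / 2 ^ m) % 2 := by
  have h10 : (10:ℕ) ^ m = 2 ^ m * 5 ^ m := by rw [← Nat.mul_pow]
  have h10' : (10:ℕ) ^ (m+1) = 2 ^ (m+1) * 5 ^ (m+1) := by rw [← Nat.mul_pow]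
  have h2m : (2:ℕ) ^ m ∣ 10 ^ m := ⟨5 ^ m, h10⟩
  have h2m' : (2:ℕ) ^ (m+1) ∣ 10 ^ (m+1) := ⟨5 ^ (m+1), h10'⟩
  have hdx : 2 ^ m ∣ x := by
    have h1 : 2 ^ i ≡ x [MOD 2 ^ m] := hxc.of_dvd h2m
    have h2 : (2:ℕ) ^ m ∣ 2 ^ i := pow_dvd_pow 2 him.le
    exact Nat.dvd_of_mod_eq_zero (by rw [← h1, Nat.mod_eq_zero_of_dvd h2])
  have h4 : 2 ^ (i + 4 * j * 5 ^ (m - 1)) ≡ x + a * 10 ^ m [MOD 2 ^ (m+1)] :=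
    haj.of_dvd h2m'
  have h5 : (2:ℕ) ^ (m+1) ∣ 2 ^ (i + 4 * j * 5 ^ (m - 1)) :=
    pow_dvd_pow 2 (le_trans him (Nat.le_add_right _ _))
  have h6 : (2:ℕ) ^ (m+1) ∣ x + a * 10 ^ m :=
    (Nat.modEq_zero_iff_dvd).mp
      ((Nat.ModEq.symm h4).trans ((Nat.modEq_zero_iff_dvd).mpr h5))
  obtain ⟨y, hy⟩ := hdx
  have hyx : x / 2 ^ m = y := by
    rw [hy, Nat.mul_div_cancel_left _ (by positivity)]
  have h7 : 2 ∣ y + a * 5 ^ m := by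
    have heq : 2 ^ m * (y + a * 5 ^ m) = x + a * 10 ^ m := by
      rw [hy, h10]; ring
    have h8 : (2:ℕ) ^ (m+1) ∣ 2 ^ m * (y + a * 5 ^ m) := heq ▸ h6
    rw [pow_succ] at h8
    exact (Nat.mul_dvd_mul_iff_left (show 0 < (2:ℕ)^m by positivity)).mp h8
  obtain ⟨k, hk⟩ := (Odd.pow (⟨2, by norm_num⟩ : Odd (5:ℕ)) : Odd ((5:ℕ)^m))
  have h5m : 5 ^ m % 2 = 1 := by omega
  have hpar : (a * 5 ^ m) % 2 = a % 2 := by simp [Nat.mul_mod, h5m]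
  refine ⟨⟨y, hy⟩, ?_⟩
  rw [hyx]
  omega
end

section
/- Let i > m ≥ 1 and suppose 2^i ≡ x (mod 10^m). For j = 0,1,2,3,4 define a_j in {0,...,9} by 2^(i + 4·j·5^(m-1)) ≡ x + a_j·10^m (mod 10^(m+1)). Then the map j ↦ a_j is injective on {0,1,2,3,4}, and the values {a_0,...,a_4} equal either {0,2,4,6,8} or {1,3,5,7,9}. -/
lemma key_aux : ∀ n : ℕ, (2:ℤ) ^ (4 * 5 ^ n) ≡ 1 + 3 * 5 ^ (n + 1) [ZMOD (5:ℤ) ^ (n + 2)] := by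
  intro n
  induction n with
  | zero => decide
  | succ n ih =>
    obtain ⟨K, hK⟩ := (Int.ModEq.symm ih).dvd
    have hA : (2:ℤ) ^ (4 * 5 ^ n) = 1 + 3 * 5 ^ (n + 1) + 5 ^ (n + 2) * K := by linarith
    have hpow : (2:ℤ) ^ (4 * 5 ^ (n + 1)) = ((2:ℤ) ^ (4 * 5 ^ n)) ^ 5 := by
      rw [← pow_mul]; ring_nf
    rw [hpow, Int.modEq_iff_dvd]
    set c : ℤ := 3 + 5 * K with hc
    refine ⟨-(K + 5 ^ n * (2 * c ^ 2 + 2 * 5 ^ (n + 1) * c ^ 3 + 5 ^ (2 * n + 2) * c ^ 4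
      + 5 ^ (3 * n + 2) * c ^ 5)), ?_⟩
    rw [hA, hc]
    ring

lemma pow_one_add_modEq (y n : ℤ) (h : n ∣ y ^ 2) :
    ∀ t : ℕ, (1 + y) ^ t ≡ 1 + t * y [ZMOD n] := by
  intro t
  induction t with
  | zero => simp
  | succ t ih =>
    have h1 : (1 + y) ^ (t + 1) = (1 + y) ^ t * (1 + y) := by ring
    have h2 : (1 + (t:ℤ) * y) * (1 + y) = 1 + ((t:ℤ) + 1) * y + t * y ^ 2 := by ring
    calc (1 + y) ^ (t + 1) = (1 + y) ^ t * (1 + y) := h1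
      _ ≡ (1 + (t:ℤ) * y) * (1 + y) [ZMOD n] := ih.mul_right _
      _ = 1 + ((t:ℤ) + 1) * y + t * y ^ 2 := h2
      _ ≡ 1 + ((t:ℤ) + 1) * y + t * 0 [ZMOD n] :=
          Int.ModEq.add_left _ ((Int.modEq_zero_iff_dvd.mpr h).mul_left _)
      _ = 1 + ((t + 1 : ℕ) : ℤ) * y := by push_cast; ring

theorem stmt_3 (i m x : ℕ) (hm : 1 ≤ m) (him : m < i)
    (hxc : 2 ^ i ≡ x [MOD 10 ^ m])
    (a : Fin 5 → ℕ) (ha : ∀ j, a j ≤ 9)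
    (haj : ∀ j : Fin 5,
      2 ^ (i + 4 * (j : ℕ) * 5 ^ (m - 1)) ≡ x + a j * 10 ^ m [MOD 10 ^ (m + 1)]) :
    Function.Injective a ∧
      (Set.range a = ({0, 2, 4, 6, 8} : Set ℕ) ∨
        Set.range a = ({1, 3, 5, 7, 9} : Set ℕ)) := by
  have h5dvd : (5:ℕ) ^ (m + 1) ∣ 10 ^ (m + 1) := pow_dvd_pow_of_dvd (by norm_num) _
  have h2dvd : (2:ℕ) ^ (m + 1) ∣ 10 ^ (m + 1) := pow_dvd_pow_of_dvd (by norm_num) _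
  -- injectivity helper
  have hlt : ∀ j k : Fin 5, (j:ℕ) < (k:ℕ) → a j = a k → False := by
    intro j k hjk heq
    set t : ℕ := (k:ℕ) - (j:ℕ) with htdef
    have ht1 : 1 ≤ t := by omega
    have ht4 : t ≤ 4 := by omega
    have hk : (k:ℕ) = (j:ℕ) + t := by omega
    have h1 : 2 ^ (i + 4 * (j:ℕ) * 5 ^ (m - 1)) ≡
        2 ^ (i + 4 * (k:ℕ) * 5 ^ (m - 1)) [MOD 10 ^ (m + 1)] := by
      refine (haj j).trans ?_
      rw [heq]
      exact (haj k).symm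
    have h2 : 2 ^ (i + 4 * (j:ℕ) * 5 ^ (m - 1)) ≡
        2 ^ (i + 4 * (k:ℕ) * 5 ^ (m - 1)) [MOD 5 ^ (m + 1)] :=
      h1.of_dvd h5dvd
    have hexp : i + 4 * (k:ℕ) * 5 ^ (m - 1)
        = (i + 4 * (j:ℕ) * 5 ^ (m - 1)) + 4 * t * 5 ^ (m - 1) := by
      rw [hk]; ring
    have h2' : 2 ^ (i + 4 * (j:ℕ) * 5 ^ (m - 1)) * 1 ≡
        2 ^ (i + 4 * (j:ℕ) * 5 ^ (m - 1)) * 2 ^ (4 * t * 5 ^ (m - 1)) [MOD 5 ^ (m + 1)] := by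
      rw [mul_one, ← pow_add, ← hexp]; exact h2
    have hcop : Nat.gcd (5 ^ (m + 1)) (2 ^ (i + 4 * (j:ℕ) * 5 ^ (m - 1))) = 1 :=
      Nat.Coprime.pow _ _ (by norm_num)
    have h3 : (1 : ℕ) ≡ 2 ^ (4 * t * 5 ^ (m - 1)) [MOD 5 ^ (m + 1)] :=
      Nat.ModEq.cancel_left_of_coprime hcop h2'
    -- move to ℤ
    have h3' : (1 : ℤ) ≡ (2:ℤ) ^ (4 * t * 5 ^ (m - 1)) [ZMOD (5:ℤ) ^ (m + 1)] := by
      have := Int.natCast_modEq_iff.mpr h3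
      push_cast at this
      exact this
    have hd : 4 * t * 5 ^ (m - 1) = (4 * 5 ^ (m - 1)) * t := by ring
    have hkey : (2:ℤ) ^ (4 * 5 ^ (m - 1)) ≡ 1 + 3 * 5 ^ m [ZMOD (5:ℤ) ^ (m + 1)] := by
      have := key_aux (m - 1)
      have hm1 : m - 1 + 1 = m := by omega
      have hm2 : m - 1 + 2 = m + 1 := by omega
      rwa [hm1, hm2] at this
    have h4 : (2:ℤ) ^ (4 * t * 5 ^ (m - 1)) ≡ (1 + 3 * 5 ^ m) ^ t [ZMOD (5:ℤ) ^ (m + 1)] := by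
      rw [hd, pow_mul]
      exact hkey.pow t
    have hy2 : (5:ℤ) ^ (m + 1) ∣ (3 * 5 ^ m) ^ 2 := by
      have : (3 * (5:ℤ) ^ m) ^ 2 = 5 ^ (2 * m) * 9 := by ring
      rw [this]
      exact Dvd.dvd.mul_right (pow_dvd_pow 5 (by omega)) 9
    have h5 : (1 + 3 * (5:ℤ) ^ m) ^ t ≡ 1 + t * (3 * 5 ^ m) [ZMOD (5:ℤ) ^ (m + 1)] :=
      pow_one_add_modEq _ _ hy2 t
    have h6 : (1 : ℤ) ≡ 1 + t * (3 * 5 ^ m) [ZMOD (5:ℤ) ^ (m + 1)] :=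
      (h3'.trans h4).trans h5
    have h7 : (5:ℤ) ^ (m + 1) ∣ (t * (3 * 5 ^ m)) := by
      have := h6.dvd
      have heq7 : (1 + (t:ℤ) * (3 * 5 ^ m)) - 1 = t * (3 * 5 ^ m) := by ring
      rwa [heq7] at this
    have h8 : (5:ℤ) ^ m * 5 ∣ 5 ^ m * (3 * t) := by
      have e1 : (5:ℤ) ^ (m + 1) = 5 ^ m * 5 := by ring
      have e2 : (t:ℤ) * (3 * 5 ^ m) = 5 ^ m * (3 * t) := by ring
      rw [e1, e2] at h7
      exact h7
    have h9 : (5:ℤ) ∣ 3 * t := (mul_dvd_mul_iff_left (pow_ne_zero m (by norm_num))).mp h8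
    have h10 : (5:ℕ) ∣ 3 * t := by exact_mod_cast h9
    omega
  have hinj : Function.Injective a := by
    intro j k h
    rcases lt_trichotomy ((j:ℕ)) ((k:ℕ)) with hc | hc | hc
    · exact absurd h (fun h => hlt j k hc h)
    · exact Fin.ext hc
    · exact absurd h.symm (fun h => hlt k j hc h)
  refine ⟨hinj, ?_⟩
  -- parity
  have hpar : ∀ j k : Fin 5, a j % 2 = a k % 2 := by
    intro j k
    have hz : ∀ l : Fin 5, x + a l * 10 ^ m ≡ 0 [MOD 2 ^ (m + 1)] := by
      intro l
      have h1 : 2 ^ (i + 4 * (l:ℕ) * 5 ^ (m - 1)) ≡ x + a l * 10 ^ m [MOD 2 ^ (m + 1)] :=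
        (haj l).of_dvd h2dvd
      have h2 : (2:ℕ) ^ (m + 1) ∣ 2 ^ (i + 4 * (l:ℕ) * 5 ^ (m - 1)) :=
        pow_dvd_pow 2 (by omega)
      have h3 : 2 ^ (i + 4 * (l:ℕ) * 5 ^ (m - 1)) ≡ 0 [MOD 2 ^ (m + 1)] :=
        (Nat.modEq_zero_iff_dvd).mpr h2
      exact h3.symm.trans h1 |>.symm
    have h4 : x + a j * 10 ^ m ≡ x + a k * 10 ^ m [MOD 2 ^ (m + 1)] :=
      (hz j).trans (hz k).symm
    have h5 : a j * 10 ^ m ≡ a k * 10 ^ m [MOD 2 ^ (m + 1)] :=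
      Nat.ModEq.add_left_cancel' x h4
    have h6 : (a j * 5 ^ m) * 2 ^ m ≡ (a k * 5 ^ m) * 2 ^ m [MOD 2 * 2 ^ m] := by
      have e1 : ∀ b : ℕ, b * 10 ^ m = (b * 5 ^ m) * 2 ^ m := by
        intro b
        rw [show (10:ℕ) = 5 * 2 by norm_num, mul_pow]
        ring
      have e2 : (2:ℕ) ^ (m + 1) = 2 * 2 ^ m := by ring
      rw [e1, e1, e2] at h5
      exact h5
    have h7 : a j * 5 ^ m ≡ a k * 5 ^ m [MOD 2] :=
      Nat.ModEq.mul_right_cancel' (pow_ne_zero m (by norm_num)) h6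
    have h8 : a j ≡ a k [MOD 2] :=
      Nat.ModEq.cancel_right_of_coprime (by simp [Nat.Coprime, Nat.coprime_pow_left_iff,
        show 0 < m from hm]) h7
    exact h8
  -- range
  set S : Finset ℕ := (Finset.range 10).filter (fun n => n % 2 = a 0 % 2) with hS
  have hmem : ∀ j, a j ∈ S := by
    intro j
    rw [hS, Finset.mem_filter, Finset.mem_range]
    exact ⟨by have := ha j; omega, hpar j 0⟩
  have himg : Finset.univ.image a = S := by
    apply Finset.eq_of_subset_of_card_le
    · intro y hy
      rw [Finset.mem_image] at hy
      obtain ⟨j, _, rfl⟩ := hy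
      exact hmem j
    · have hcard : (Finset.univ.image a).card = 5 := by
        rw [Finset.card_image_of_injective _ hinj, Finset.card_univ, Fintype.card_fin]
      rw [hcard]
      rcases Nat.mod_two_eq_zero_or_one (a 0) with h | h <;> rw [hS, h] <;> decide
  have hrange : Set.range a = ↑S := by
    rw [← himg, Finset.coe_image, Finset.coe_univ, Set.image_univ]
  rcases Nat.mod_two_eq_zero_or_one (a 0) with h | h
  · left
    rw [hrange]
    ext n
    simp only [hS, h, Finset.coe_filter, Finset.mem_range, Set.mem_setOf_eq,
      Set.mem_insert_iff, Set.mem_singleton_iff]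
    omega
  · right
    rw [hrange]
    ext n
    simp only [hS, h, Finset.coe_filter, Finset.mem_range, Set.mem_setOf_eq,
      Set.mem_insert_iff, Set.mem_singleton_iff]
    omega
end

section
/- Let i > m ≥ 1 with 2^i ≡ x (mod 10^m). Then there exists j with 0 ≤ j ≤ 4 such that 2^(i + 4·j·5^(m-1)) ≡ x (mod 10^(m+1)) or there exists j with 0 ≤ j ≤ 4 such that the digit of 2^(i + 4·j·5^(m-1)) in position m (i.e., ⌊2^(i+4j·5^(m-1))/10^m⌋ mod 10) equals any prescribed value of the correct parity. -/
lemma two_pow_five_struct (k : ℕ) : ∃ u, 2 ^ (4 * 5 ^ k) = 1 + 5 ^ (k+1) * u ∧ u % 5 ≠ 0 := by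
  induction k with
  | zero => exact ⟨3, by norm_num, by norm_num⟩
  | succ k ih =>
    obtain ⟨u, hu, hu5⟩ := ih
    set Q := (5:ℕ) ^ k with hQ
    refine ⟨u*(1+2*5^(k+1)*u+2*(5^(k+1))^2*u^2+(5^(k+1))^3*u^3) + (5^(k+1))^3*Q*u^5, ?_, ?_⟩
    · have h1 : 4 * 5 ^ (k+1) = (4 * 5 ^ k) * 5 := by ring
      rw [h1, pow_mul, hu]
      have hP : (5:ℕ)^(k+1) = 5*Q := by rw [pow_succ]; ring
      have hP2 : (5:ℕ)^(k+1+1) = 5*(5*Q) := by rw [pow_succ, hP]; ring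
      rw [hP, hP2]; ring
    · have h2 : u*(1+2*5^(k+1)*u+2*(5^(k+1))^2*u^2+(5^(k+1))^3*u^3) + (5^(k+1))^3*Q*u^5
          = u + 5*(Q*u^2*(2 + 2*5*Q*u + 25*Q^2*u^2) + 25*Q^4*u^5) := by
        rw [pow_succ]; ring
      rw [h2]
      simpa [Nat.add_mul_mod_self_left] using hu5

lemma one_add_pow (P j : ℕ) : ∃ C, (1+P)^j = 1 + j*P + P^2*C := by
  induction j with
  | zero => exact ⟨0, by ring⟩
  | succ j ih =>
    obtain ⟨C, hC⟩ := ih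
    exact ⟨C + j + C*P, by rw [pow_succ, hC]; ring⟩

theorem stmt_4 (i m x : ℕ) (hm : 1 ≤ m) (him : m < i)
    (hxc : 2 ^ i ≡ x [MOD 10 ^ m]) :
    (∃ j ≤ 4, 2 ^ (i + 4 * j * 5 ^ (m - 1)) ≡ x [MOD 10 ^ (m + 1)]) ∨
    (∀ v ≤ 9, v % 2 = (2 ^ i / 10 ^ m) % 10 % 2 →
      ∃ j ≤ 4, (2 ^ (i + 4 * j * 5 ^ (m - 1)) / 10 ^ m) % 10 = v) := by
  right
  obtain ⟨u, hu, hu5⟩ := two_pow_five_struct (m-1)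
  have hm1 : m - 1 + 1 = m := Nat.succ_pred_eq_of_pos hm
  rw [hm1] at hu
  set e : ℕ → ℕ := fun j => i + 4 * j * 5 ^ (m - 1) with he
  set d : ℕ → ℕ := fun j => 2 ^ (e j) / 10 ^ m % 10 with hd
  have hsplit : ∀ j, 2 ^ (e j) = 2 ^ i * (2 ^ (4 * 5 ^ (m-1))) ^ j := by
    intro j
    have h : 4 * j * 5 ^ (m-1) = (4 * 5 ^ (m-1)) * j := by ring
    rw [he]; dsimp only; rw [h, pow_add, pow_mul]
  -- mod 10^m : all equal to 2^i
  have fact0 : ∀ j, 2 ^ (e j) % 10 ^ m = 2 ^ i % 10 ^ m := by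
    intro j
    have h10 : (10:ℕ) ^ m = 2 ^ m * 5 ^ m := by rw [show (10:ℕ) = 2 * 5 by norm_num, mul_pow]
    have hco : Nat.Coprime (2 ^ m) (5 ^ m) := Nat.Coprime.pow m m (by norm_num)
    have h2 : 2 ^ (e j) ≡ 2 ^ i [MOD 2 ^ m] := by
      have hd1 : 2 ^ m ∣ 2 ^ (e j) := pow_dvd_pow 2 (by rw [he]; dsimp only; omega)
      have hd2 : 2 ^ m ∣ 2 ^ i := pow_dvd_pow 2 him.le
      calc 2 ^ (e j) ≡ 0 [MOD 2 ^ m] := (Nat.modEq_zero_iff_dvd).2 hd1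
        _ ≡ 2 ^ i [MOD 2 ^ m] := ((Nat.modEq_zero_iff_dvd).2 hd2).symm
    have h5 : 2 ^ (e j) ≡ 2 ^ i [MOD 5 ^ m] := by
      rw [hsplit j]
      have ht : (2:ℕ) ^ (4 * 5 ^ (m-1)) ≡ 1 [MOD 5 ^ m] := by
        show (2:ℕ) ^ (4 * 5 ^ (m-1)) % 5 ^ m = 1 % 5 ^ m
        rw [hu, Nat.add_mul_mod_self_left]
      calc 2 ^ i * (2 ^ (4 * 5 ^ (m-1))) ^ j ≡ 2 ^ i * 1 ^ j [MOD 5 ^ m] :=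
            (Nat.ModEq.refl _).mul (ht.pow j)
        _ = 2 ^ i := by ring
    rw [h10]
    exact (Nat.modEq_and_modEq_iff_modEq_mul hco).1 ⟨h2, h5⟩
  -- digit formula
  have digit : ∀ j, 2 ^ (e j) % 10 ^ (m+1) = 2 ^ (e j) % 10 ^ m + 10 ^ m * d j := by
    intro j
    rw [pow_succ, Nat.mod_mul]
  -- mod 5^(m+1) structure
  have fact5 : ∀ j, 2 ^ (e j) ≡ 2 ^ i + 5 ^ m * (2 ^ i * u * j) [MOD 5 ^ (m+1)] := by
    intro j
    obtain ⟨C, hC⟩ := one_add_pow (5 ^ m * u) j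
    have h52 : (5:ℕ) ^ m * 5 ^ m = 5 ^ (m+1) * 5 ^ (m-1) := by
      rw [← pow_add, ← pow_add]; congr 1; omega
    have heq : 2 ^ (e j) = (2 ^ i + 5 ^ m * (2 ^ i * u * j))
        + 5 ^ (m+1) * (5 ^ (m-1) * (2 ^ i * u ^ 2 * C)) := by
      rw [hsplit j, hu, hC]
      calc 2 ^ i * (1 + j * (5 ^ m * u) + (5 ^ m * u) ^ 2 * C)
          = (2 ^ i + 5 ^ m * (2 ^ i * u * j)) + (5 ^ m * 5 ^ m) * (5 ^ 0 * (2 ^ i * u ^ 2 * C)) := by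
            ring
        _ = _ := by rw [h52]; ring
    show 2 ^ (e j) % 5 ^ (m+1) = (2 ^ i + 5 ^ m * (2 ^ i * u * j)) % 5 ^ (m+1)
    rw [heq, Nat.add_mul_mod_self_left]
  -- injectivity of j ↦ d j on {0..4}
  have hinj : ∀ j k, j ≤ 4 → k ≤ 4 → d j = d k → j = k := by
    intro j k hj hk hdjk
    have h10 : 2 ^ (e j) ≡ 2 ^ (e k) [MOD 10 ^ (m+1)] := by
      show 2 ^ (e j) % 10 ^ (m+1) = 2 ^ (e k) % 10 ^ (m+1)
      rw [digit j, digit k, hdjk, fact0 j, fact0 k]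
    have h5 : 2 ^ (e j) ≡ 2 ^ (e k) [MOD 5 ^ (m+1)] :=
      h10.of_dvd (pow_dvd_pow_of_dvd (by norm_num) (m+1))
    have hbb : 2 ^ i + 5 ^ m * (2 ^ i * u * j) ≡ 2 ^ i + 5 ^ m * (2 ^ i * u * k) [MOD 5 ^ (m+1)] :=
      ((fact5 j).symm.trans h5).trans (fact5 k)
    have h1 : 5 ^ m * (2 ^ i * u * j) ≡ 5 ^ m * (2 ^ i * u * k) [MOD 5 ^ m * 5] := by
      have h := Nat.ModEq.add_left_cancel' (2 ^ i) hbb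
      rwa [pow_succ] at h
    have h2 : 2 ^ i * u * j ≡ 2 ^ i * u * k [MOD 5] :=
      Nat.ModEq.mul_left_cancel' (pow_ne_zero m (by norm_num)) h1
    have hcu : Nat.gcd 5 (2 ^ i * u) = 1 := by
      have hu' : ¬ (5 ∣ u) := by omega
      have c1 : Nat.Coprime 5 (2 ^ i) :=
        (((Nat.coprime_primes (by norm_num) (by norm_num)).2 (by norm_num))).pow_right i
      have c2 : Nat.Coprime 5 u := (Nat.Prime.coprime_iff_not_dvd (by norm_num)).2 hu'
      exact Nat.Coprime.mul_right c1 c2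
    have h3 : j ≡ k [MOD 5] := Nat.ModEq.cancel_left_of_coprime hcu h2
    have : j % 5 = k % 5 := h3
    omega
  -- parity
  obtain ⟨s, hs⟩ : 2 ^ m ∣ 2 ^ i % 10 ^ m := by
    have h1 : (2:ℕ) ^ m ∣ 10 ^ m := pow_dvd_pow_of_dvd (by norm_num) m
    exact (Nat.dvd_mod_iff h1).2 (pow_dvd_pow 2 him.le)
  have hpar : ∀ j, (d j + s) % 2 = 0 := by
    intro j
    have h1 : 2 ^ (m+1) ∣ 2 ^ (e j) := pow_dvd_pow 2 (by rw [he]; dsimp only; omega)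
    have h2 : 2 ^ (e j) = 10 ^ (m+1) * (2 ^ (e j) / 10 ^ (m+1))
        + (2 ^ i % 10 ^ m + 10 ^ m * d j) := by
      rw [← fact0 j, ← digit j]
      exact (Nat.div_add_mod _ _).symm
    have h3 : 2 ^ (m+1) ∣ 10 ^ (m+1) * (2 ^ (e j) / 10 ^ (m+1)) :=
      dvd_mul_of_dvd_left (pow_dvd_pow_of_dvd (by norm_num) (m+1)) _
    have h4 : 2 ^ (m+1) ∣ 2 ^ i % 10 ^ m + 10 ^ m * d j := by
      have := h1; rw [h2] at this
      exact (Nat.dvd_add_right h3).1 this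
    have h5 : 2 ^ m * 2 ∣ 2 ^ m * (s + 5 ^ m * d j) := by
      have heq : 2 ^ i % 10 ^ m + 10 ^ m * d j = 2 ^ m * (s + 5 ^ m * d j) := by
        rw [hs, show (10:ℕ) ^ m = 2 ^ m * 5 ^ m by rw [show (10:ℕ) = 2 * 5 by norm_num, mul_pow]]; ring
      rw [← heq, ← pow_succ]; exact h4
    have h6 : 2 ∣ s + 5 ^ m * d j :=
      (mul_dvd_mul_iff_left (pow_ne_zero m (two_ne_zero))).1 h5
    have h5m : (5:ℕ) ^ m % 2 = 1 := by
      rw [Nat.pow_mod]; norm_num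
    have h7 : (s + 5 ^ m * d j) % 2 = (s + d j) % 2 := by
      rw [Nat.add_mod, Nat.mul_mod, h5m, one_mul, Nat.mod_mod_of_dvd _ dvd_rfl, ← Nat.add_mod]
    have h8 : (s + 5 ^ m * d j) % 2 = 0 := by
      obtain ⟨w, hw⟩ := h6; omega
    omega
  -- assemble
  intro v hv9 hvp
  have hd0 : (2 ^ i / 10 ^ m) % 10 = d 0 := by
    rw [hd]; dsimp only; rw [he]; dsimp only; norm_num
  have key := Finset.surj_on_of_inj_on_of_card_le
    (s := Finset.range 5) (t := (Finset.range 10).filter (fun w => w % 2 = d 0 % 2))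
    (fun j _ => d j)
    (fun j hj => by
      simp only [Finset.mem_filter, Finset.mem_range]
      exact ⟨Nat.mod_lt _ (by norm_num), by have h1 := hpar j; have h2 := hpar 0; omega⟩)
    (fun a b ha hb h => hinj a b (by have := Finset.mem_range.1 ha; omega)
      (by have := Finset.mem_range.1 hb; omega) h)
    (by rcases Nat.mod_two_eq_zero_or_one (d 0) with h | h <;> rw [h] <;> decide)
  obtain ⟨j, hj, hdj⟩ := key v (by
    simp only [Finset.mem_filter, Finset.mem_range]
    exact ⟨by omega, by rw [hd0] at hvp; omega⟩)
  exact ⟨j, by have := Finset.mem_range.1 hj; omega, hdj.symm⟩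
end

section
/- Suppose p > m+1 > 2 and the digit of 2^p in position m (that is, ⌊2^p/10^m⌋ mod 10) is even and the digits of 2^p in positions m' with m_0 < m' < m are zero for some m_0. Then there exists q > p with 2^q ≡ 2^p (mod 10^m) and the digit of 2^q in position m equal to 0. -/
lemma two_ne_zero_zmod5 : (2 : ZMod 5) ≠ 0 := by decide

/-- v₅(2^(4·5^n) - 1) = n+1, in exact form. -/
lemma five_adic (n : ℕ) : ∃ a : ℕ, ¬ 5 ∣ a ∧ 2 ^ (4 * 5 ^ n) = 1 + a * 5 ^ (n + 1) := by
  induction n with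
  | zero => exact ⟨3, by decide, by norm_num⟩
  | succ n ih =>
    obtain ⟨a, ha5, heq⟩ := ih
    refine ⟨a + 5 * (2*a^2*5^n + 10*a^3*(5^n)^2 + 25*a^4*(5^n)^3 + 25*a^5*(5^n)^4), ?_, ?_⟩
    · intro h
      apply ha5
      set t := 2*a^2*5^n + 10*a^3*(5^n)^2 + 25*a^4*(5^n)^3 + 25*a^5*(5^n)^4
      omega
    · have h1 : 2 ^ (4 * 5 ^ (n+1)) = (2 ^ (4 * 5 ^ n)) ^ 5 := by
        rw [← pow_mul]; ring_nf
      rw [h1, heq]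
      have h2 : (5:ℕ) ^ (n+1) = 5 * 5 ^ n := by ring
      have h3 : (5:ℕ) ^ (n+2) = 25 * 5 ^ n := by ring
      rw [h2, h3]
      generalize (5:ℕ)^n = s
      ring

lemma pow_mul_modeq (n a : ℕ) (heq : 2 ^ (4 * 5 ^ n) = 1 + a * 5 ^ (n + 1)) (k : ℕ) :
    2 ^ (k * (4 * 5 ^ n)) ≡ 1 + k * a * 5 ^ (n + 1) [MOD 5 ^ (n + 2)] := by
  induction k with
  | zero => simpa using Nat.ModEq.refl 1
  | succ k ih =>
    have h1 : 2 ^ ((k+1) * (4 * 5 ^ n)) = 2 ^ (k * (4 * 5 ^ n)) * 2 ^ (4 * 5 ^ n) := by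
      rw [← pow_add]; ring_nf
    rw [h1, heq]
    calc 2 ^ (k * (4 * 5 ^ n)) * (1 + a * 5 ^ (n+1))
        ≡ (1 + k * a * 5 ^ (n+1)) * (1 + a * 5 ^ (n+1)) [MOD 5 ^ (n+2)] :=
          ih.mul_right _
      _ ≡ 1 + (k+1) * a * 5 ^ (n+1) [MOD 5 ^ (n+2)] := by
          have h2 : (1 + k*a*5^(n+1)) * (1 + a*5^(n+1))
              = (1 + (k+1)*a*5^(n+1)) + (k*a^2*5^n) * 5^(n+2) := by
            have h3 : (5:ℕ)^(n+1) * 5^(n+1) = 5^n * 5^(n+2) := by ring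
            calc (1 + k*a*5^(n+1)) * (1 + a*5^(n+1))
                = 1 + (k+1)*a*5^(n+1) + k*a^2*(5^(n+1)*5^(n+1)) := by ring
              _ = _ := by rw [h3]; ring
          rw [h2]
          simp [Nat.ModEq, Nat.add_mul_mod_self_right]

theorem stmt_5 (m p m₀ : ℕ) (hm : 2 < m + 1) (hp : m + 1 < p)
    (heven : (2 ^ p / 10 ^ m) % 10 % 2 = 0)
    (hzeros : ∀ m', m₀ < m' → m' < m → (2 ^ p / 10 ^ m') % 10 = 0) :
    ∃ q > p, 2 ^ q ≡ 2 ^ p [MOD 10 ^ m] ∧ (2 ^ q / 10 ^ m) % 10 = 0 := by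
  obtain ⟨n, rfl⟩ : ∃ n, m = n + 1 := ⟨m - 1, by omega⟩
  obtain ⟨a, ha5, haeq⟩ := five_adic n
  set c := 2 ^ p / 10 ^ (n+1) with hc
  set r := 2 ^ p % 10 ^ (n+1) with hrdef
  have hsum : 10 ^ (n+1) * c + r = 2 ^ p := Nat.div_add_mod _ _
  have hc2 : 2 ∣ c := by
    have := Nat.mod_mod_of_dvd c (by norm_num : (2:ℕ) ∣ 10)
    omega
  have h2p : (2:ℕ) ^ (n+2) ∣ 2 ^ p := pow_dvd_pow 2 (by omega)
  have h2c : (2:ℕ) ^ (n+2) ∣ 10 ^ (n+1) * c := by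
    obtain ⟨c', hc'⟩ := hc2
    have h10 : (10:ℕ) ^ (n+1) = 2 ^ (n+1) * 5 ^ (n+1) := by rw [show (10:ℕ) = 2*5 by norm_num, mul_pow]
    rw [hc', h10]
    exact ⟨5 ^ (n+1) * c', by ring⟩
  have h2r : (2:ℕ) ^ (n+2) ∣ r := by
    have : r = 2 ^ p - 10 ^ (n+1) * c := by omega
    rw [this]; exact Nat.dvd_sub h2p h2c
  haveI : Fact (Nat.Prime 5) := ⟨by norm_num⟩
  set w : ZMod 5 := (a : ZMod 5) * (2 : ZMod 5) ^ p with hw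
  have h2ne : (2 : ZMod 5) ≠ 0 := two_ne_zero_zmod5
  have hwne : w ≠ 0 :=
    mul_ne_zero (by rw [Ne, ZMod.natCast_eq_zero_iff]; exact ha5)
      (pow_ne_zero _ h2ne)
  set k : ℕ := (-((c : ZMod 5) * 2 ^ (n+1)) * w⁻¹).val + 5 with hk
  clear_value k
  have hkcast : (k : ZMod 5) = -((c : ZMod 5) * 2 ^ (n+1)) * w⁻¹ := by
    rw [hk]
    rw [Nat.cast_add, ZMod.natCast_zmod_val]
    norm_num
    exact ZMod.natCast_self 5
  have hk5 : (5:ℕ) ∣ c * 2 ^ (n+1) + k * (a * 2 ^ p) := by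
    rw [← ZMod.natCast_eq_zero_iff]
    push_cast
    rw [hkcast, ← hw]
    linear_combination (-((c : ZMod 5) * 2 ^ (n+1))) * inv_mul_cancel₀ hwne
  refine ⟨p + k * (4 * 5 ^ n), by nlinarith [pow_pos (show 0 < 5 by norm_num) n], ?_⟩
  have key : 2 ^ (p + k * (4 * 5 ^ n)) ≡ r [MOD 10 ^ (n+2)] := by
    have hd : (10:ℕ) ^ (n+2) = 2 ^ (n+2) * 5 ^ (n+2) := by rw [show (10:ℕ) = 2*5 by norm_num, mul_pow]
    have hcop : Nat.Coprime (2 ^ (n+2)) (5 ^ (n+2)) :=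
      Nat.Coprime.pow _ _ (by norm_num)
    rw [hd, ← Nat.modEq_and_modEq_iff_modEq_mul hcop]
    constructor
    · have h1 : 2 ^ (p + k * (4 * 5 ^ n)) ≡ 0 [MOD 2 ^ (n+2)] :=
        (Nat.modEq_zero_iff_dvd).mpr (pow_dvd_pow 2 (by omega))
      have h2 : r ≡ 0 [MOD 2 ^ (n+2)] := (Nat.modEq_zero_iff_dvd).mpr h2r
      exact h1.trans h2.symm
    · obtain ⟨e, he⟩ := hk5
      calc 2 ^ (p + k * (4 * 5 ^ n)) = 2 ^ p * 2 ^ (k * (4 * 5 ^ n)) := by rw [pow_add]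
        _ ≡ 2 ^ p * (1 + k * a * 5 ^ (n+1)) [MOD 5 ^ (n+2)] :=
            (pow_mul_modeq n a haeq k).mul_left _
        _ = r + e * 5 ^ (n+2) := by
            have h10 : (10:ℕ)^(n+1) = 2^(n+1) * 5^(n+1) := by rw [show (10:ℕ) = 2*5 by norm_num, mul_pow]
            have h5 : (5:ℕ)^(n+2) = 5 * 5^(n+1) := by ring
            calc 2^p * (1 + k*a*5^(n+1)) = 2^p + (k*(a*2^p)) * 5^(n+1) := by ring
              _ = r + (c*2^(n+1) + k*(a*2^p)) * 5^(n+1) := by rw [← hsum, h10]; ring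
              _ = r + e * 5^(n+2) := by rw [he, h5]; ring
        _ ≡ r [MOD 5 ^ (n+2)] := by
            simp [Nat.ModEq, Nat.add_mul_mod_self_right]
  have hrlt : r < 10 ^ (n+1) := Nat.mod_lt _ (by positivity)
  constructor
  · have h1 : 2 ^ (p + k * (4 * 5 ^ n)) ≡ r [MOD 10 ^ (n+1)] :=
      key.of_dvd (pow_dvd_pow 10 (by omega))
    exact h1.trans (Nat.mod_modEq _ _)
  · have hmod : 2 ^ (p + k * (4 * 5 ^ n)) % 10 ^ (n+2) = r := by
      have h := key
      rwa [Nat.ModEq, Nat.mod_eq_of_lt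
        (lt_of_lt_of_le hrlt (Nat.pow_le_pow_right (by norm_num) (by omega)))] at h
    have h10 : (10:ℕ) ^ (n+2) = 10 ^ (n+1) * 10 := by ring
    rw [← Nat.mod_mul_right_div_self, ← h10, hmod, Nat.div_eq_of_lt hrlt]
end

section
/- Let m ≥ 1 and p, p' > m with p' = p + 4k·5^(m-1) for some integer k ≥ 1. Write 2^p ≡ x + a·10^m (mod 10^(m+1)) and 2^(p') ≡ x + a'·10^m (mod 10^(m+1)) where x < 10^m, 0 ≤ a, a' ≤ 9. If additionally 2^p ≡ x + a·10^m + c·10^(m+1) (mod 10^(m+2)) and 2^(p') ≡ x + a'·10^m + c'·10^(m+1) (mod 10^(m+2)) with c, c' both odd, then a ≡ a' (mod 4). -/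
/-!
Since the order of 2 modulo 5^m divides φ(5^m) = 4·5^(m-1), the difference 2^p' - 2^p = 2^p (2^(p'-p) - 1)
is divisible by 2^p·5^m, hence by 4·10^m as soon as p ≥ m + 2. Reading both expansions modulo 4·10^m and
dividing by 10^m gives a + 10c ≡ a' + 10c' (mod 4), and 10c ≡ 10c' (mod 4) because c and c' are both odd.
When p ≤ m + 1 we have 2^p < 10^(m+1), so the digit c of 2^p vanishes, contradicting its oddness.
-/

open Nat

theorem digit_eq_zero_of_lt_pow_succ {b n y x a c : ℕ} (hy : y < b ^ (n + 1))
    (h : y ≡ x + a * b ^ n + c * b ^ (n + 1) [MOD b ^ (n + 2)])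
    (hx : x < b ^ n) (ha : a < b) (hc : c < b) : c = 0 := by
  have hlow : x + a * b ^ n < b ^ (n + 1) := by
    rw [pow_succ]; nlinarith
  have hexp : x + a * b ^ n + c * b ^ (n + 1) < b ^ (n + 2) := by
    rw [pow_succ _ (n + 1)]; nlinarith
  have heq : y = x + a * b ^ n + c * b ^ (n + 1) := by
    rwa [Nat.ModEq, Nat.mod_eq_of_lt (hy.trans_le (Nat.pow_le_pow_right (by omega) (by omega))),
      Nat.mod_eq_of_lt hexp] at h
  by_contra hc0
  have : b ^ (n + 1) ≤ c * b ^ (n + 1) := Nat.le_mul_of_pos_left _ (Nat.pos_of_ne_zero hc0)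
  omega

theorem two_pow_four_mul_five_pow_modEq_one (n : ℕ) : 2 ^ (4 * 5 ^ n) ≡ 1 [MOD 5 ^ (n + 1)] := by
  have hφ : φ (5 ^ (n + 1)) = 4 * 5 ^ n := by
    rw [totient_prime_pow_succ (by norm_num)]; ring
  simpa [hφ] using ModEq.pow_totient (Coprime.pow_right (n + 1) (by decide : Coprime 2 5))

theorem two_pow_period_modEq_one (m k : ℕ) : 2 ^ (4 * k * 5 ^ (m - 1)) ≡ 1 [MOD 5 ^ m] := by
  rcases m with _ | n
  · exact modEq_one
  · simpa [← pow_mul, mul_right_comm] using (two_pow_four_mul_five_pow_modEq_one n).pow k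

theorem two_pow_add_period_modEq {m p : ℕ} (k : ℕ) (hp : m + 2 ≤ p) :
    2 ^ (p + 4 * k * 5 ^ (m - 1)) ≡ 2 ^ p [MOD 4 * 10 ^ m] := by
  have h := (two_pow_period_modEq_one m k).mul_left' (2 ^ p)
  rw [mul_one, ← pow_add] at h
  refine h.of_dvd ?_
  calc 4 * 10 ^ m = 2 ^ (m + 2) * 5 ^ m := by
        rw [show (10 : ℕ) = 2 * 5 from rfl, mul_pow]; ring
    _ ∣ 2 ^ p * 5 ^ m := mul_dvd_mul_right (pow_dvd_pow 2 hp) _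

theorem stmt_10_general (m p k x a a' c c' : ℕ)
    (hx : x < 10 ^ m) (ha : a ≤ 9) (hc : c ≤ 9)
    (h2 : 2 ^ p ≡ x + a * 10 ^ m + c * 10 ^ (m + 1) [MOD 10 ^ (m + 2)])
    (h2' : 2 ^ (p + 4 * k * 5 ^ (m - 1)) ≡ x + a' * 10 ^ m + c' * 10 ^ (m + 1)
      [MOD 10 ^ (m + 2)])
    (hcodd : c % 2 = 1) (hc'odd : c' % 2 = 1) :
    a ≡ a' [MOD 4] := by
  rcases le_or_gt p (m + 1) with hp | hp
  · have hsmall : 2 ^ p < 10 ^ (m + 1) :=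
      (Nat.pow_le_pow_right two_pos hp).trans_lt (Nat.pow_lt_pow_left (by norm_num) (by omega))
    have := digit_eq_zero_of_lt_pow_succ hsmall h2 hx (by omega) (by omega)
    omega
  · have hdvd : 4 * 10 ^ m ∣ 10 ^ (m + 2) := ⟨25, by ring⟩
    have hexp : x + 10 ^ m * (a + 10 * c) ≡ x + 10 ^ m * (a' + 10 * c') [MOD 10 ^ m * 4] := by
      have := ((h2.of_dvd hdvd).symm.trans (two_pow_add_period_modEq k hp).symm).trans
        (h2'.of_dvd hdvd)
      convert this using 1 <;> ring
    have hdigits : a + 10 * c ≡ a' + 10 * c' [MOD 4] :=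
      ModEq.mul_left_cancel' (by positivity) (hexp.add_left_cancel' x)
    unfold Nat.ModEq at hdigits ⊢
    omega

theorem stmt_10 (m p k x a a' c c' : ℕ) (hm : 1 ≤ m) (hp : m < p) (hk : 1 ≤ k)
    (hx : x < 10 ^ m) (ha : a ≤ 9) (ha' : a' ≤ 9) (hc : c ≤ 9) (hc' : c' ≤ 9)
    (h1 : 2 ^ p ≡ x + a * 10 ^ m [MOD 10 ^ (m + 1)])
    (h1' : 2 ^ (p + 4 * k * 5 ^ (m - 1)) ≡ x + a' * 10 ^ m [MOD 10 ^ (m + 1)])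
    (h2 : 2 ^ p ≡ x + a * 10 ^ m + c * 10 ^ (m + 1) [MOD 10 ^ (m + 2)])
    (h2' : 2 ^ (p + 4 * k * 5 ^ (m - 1)) ≡ x + a' * 10 ^ m + c' * 10 ^ (m + 1)
      [MOD 10 ^ (m + 2)])
    (hcodd : c % 2 = 1) (hc'odd : c' % 2 = 1) :
    a ≡ a' [MOD 4] :=
  stmt_10_general m p k x a a' c c' hx ha hc h2 h2' hcodd hc'odd
end

section
/- Suppose exponents p_n are chosen by the greedy strategy (maximizing the gap d_n − d_{n−1} between consecutive nonzero base-10 digit positions of 2^(p_n), while preserving the earlier digits modulo 10^(d_{n−1}+1)). Then every nonzero digit b_i of 2^(p_n) beyond the units digit (i ≥ 2) is odd. -/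
/-!
Since `2 ^ (4 * 5 ^ n) = 1 + 5 ^ (n + 1) * a` with `5 ∤ a`, multiplying `2 ^ p` (`p > n + 1`)
by `2 ^ (4 * 5 ^ n * K)` fixes it modulo `10 ^ (n + 1)` and adds `10 ^ (n + 1) * K * a * 2 ^ (p - n - 1)`
modulo `10 ^ (n + 2)`. As `K` varies, the digit at position `n + 1` thus runs through every
residue of its parity, so an even digit can be replaced by `0`. The resulting power of two has
its next nonzero digit strictly beyond position `d = n + 1`, against the maximality of the gap.
-/

theorem exists_two_pow_four_mul_five_pow (n : ℕ) :
    ∃ a, 2 ^ (4 * 5 ^ n) = 1 + 5 ^ (n + 1) * a ∧ ¬ 5 ∣ a := by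
  induction n with
  | zero => exact ⟨3, by norm_num, by norm_num⟩
  | succ n ih =>
    obtain ⟨a, ha, ha5⟩ := ih
    set x := 5 ^ (n + 1) * a
    -- from `(1 + x) ^ 5 = 1 + 5 x + 10 x ^ 2 + 10 x ^ 3 + 5 x ^ 4 + x ^ 5`
    refine ⟨a + 5 * (5 ^ n * a ^ 2 * (2 + 2 * x + x ^ 2) + 5 ^ (4 * n + 2) * a ^ 5), ?_, ?_⟩
    · rw [pow_succ 5 n, ← mul_assoc, pow_mul, ha]
      simp only [x]
      ring
    · rwa [Nat.dvd_add_left (dvd_mul_right 5 _)]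

theorem one_add_pow_modEq (m K : ℕ) : (1 + m) ^ K ≡ 1 + K * m [MOD m ^ 2] := by
  refine (Nat.modEq_iff_dvd.2 ?_).symm
  have := sq_dvd_add_pow_sub_sub (m : ℤ) 1 K
  rw [one_pow, one_pow, one_mul] at this
  push_cast
  exact (by ring : ((1 + m) ^ K - (1 + K * m) : ℤ) = (1 + m) ^ K - m * K - 1) ▸ this

theorem two_pow_add_mul_modEq {n a p : ℕ} (ha : 2 ^ (4 * 5 ^ n) = 1 + 5 ^ (n + 1) * a)
    (hp : n + 1 < p) (K : ℕ) :
    2 ^ (p + K * (4 * 5 ^ n)) ≡ 2 ^ p + 10 ^ (n + 1) * (K * (a * 2 ^ (p - (n + 1))))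
      [MOD 10 ^ (n + 2)] := by
  have hdvd : 10 ^ (n + 2) ∣ 2 ^ p * (5 ^ (n + 1) * a) ^ 2 := by
    rw [mul_pow, ← pow_mul, ← mul_assoc, show 10 = 2 * 5 by rfl, mul_pow]
    exact (mul_dvd_mul (pow_dvd_pow 2 hp) (pow_dvd_pow 5 (by omega))).mul_right _
  calc 2 ^ (p + K * (4 * 5 ^ n)) = 2 ^ p * (1 + 5 ^ (n + 1) * a) ^ K := by
        rw [pow_add, mul_comm K, pow_mul, ha]
    _ ≡ 2 ^ p * (1 + K * (5 ^ (n + 1) * a)) [MOD 10 ^ (n + 2)] :=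
        ((one_add_pow_modEq _ K).mul_left' (2 ^ p)).of_dvd hdvd
    _ = 2 ^ p + 10 ^ (n + 1) * (K * (a * 2 ^ (p - (n + 1)))) := by
        rw [← pow_sub_mul_pow 2 hp.le, show 10 = 2 * 5 by rfl, mul_pow]
        ring

theorem exists_add_mul_mod_ten_eq_zero {b c : ℕ} (hb : 2 ∣ b) (hc2 : 2 ∣ c) (hc5 : ¬ 5 ∣ c)
    (N : ℕ) : ∃ K, N ≤ K ∧ (b + K * c) % 10 = 0 := by
  have := Fact.mk (show Nat.Prime 5 by norm_num)
  have hc : (c : ZMod 5) ≠ 0 := by rwa [Ne, ZMod.natCast_eq_zero_iff]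
  set k : ZMod 5 := -(b : ZMod 5) / (c : ZMod 5)
  refine ⟨k.val + 5 * N, by omega, Nat.mod_eq_zero_of_dvd ?_⟩
  have h5 : 5 ∣ b + (k.val + 5 * N) * c := by
    rw [← ZMod.natCast_eq_zero_iff]
    push_cast
    simp only [ZMod.natCast_val, ZMod.cast_id', id, k]
    rw [show (5 : ZMod 5) = 0 from rfl]
    field_simp
    ring
  exact Nat.Coprime.mul_dvd_of_dvd_of_dvd (by norm_num)
    (dvd_add hb (dvd_mul_of_dvd_right hc2 _)) h5

namespace Nat

variable {b x y : ℕ}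

theorem div_pow_mod_eq_of_modEq {n m : ℕ} (h : x ≡ y [MOD b ^ n]) (hm : m < n) :
    x / b ^ m % b = y / b ^ m % b := by
  rw [← Nat.mod_mul_right_div_self, ← Nat.mod_mul_right_div_self, ← pow_succ,
    h.of_dvd (pow_dvd_pow b hm)]

theorem div_pow_mod_eq_of_modEq_add {d c : ℕ} (hb : 0 < b)
    (h : x ≡ y + b ^ d * c [MOD b ^ (d + 1)]) : x / b ^ d % b = (y / b ^ d % b + c) % b := by
  rw [div_pow_mod_eq_of_modEq h d.lt_succ_self, Nat.add_mul_div_left _ _ (pow_pos hb d),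
    Nat.mod_add_mod]

theorem modEq_of_modEq_add_pow_mul {d c : ℕ} (h : x ≡ y + b ^ d * c [MOD b ^ (d + 1)]) :
    x ≡ y [MOD b ^ d] :=
  (h.of_dvd (pow_dvd_pow b d.le_succ)).trans (Nat.add_mul_mod_self_left y _ c)

theorem lt_of_div_pow_mod_ne_zero {e n : ℕ} (hb : 1 < b) (h : x / b ^ e % b ≠ 0)
    (hx : x < b ^ n) : e < n := by
  refine (Nat.pow_lt_pow_iff_right hb).1 (lt_of_le_of_lt ?_ hx)
  by_contra! hlt
  simp [Nat.div_eq_of_lt hlt] at h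

theorem exists_next_div_pow_mod_ne_zero {d : ℕ} (hb : 1 < b) (hx : b ^ (d + 1) ≤ x) :
    ∃ e, d < e ∧ x / b ^ e % b ≠ 0 ∧ ∀ m, d < m → m < e → x / b ^ m % b = 0 := by
  classical
  have hx0 : x ≠ 0 := (lt_of_lt_of_le (pow_pos (by omega) _) hx).ne'
  have hlead : x / b ^ log b x % b ≠ 0 := by
    rw [Nat.mod_eq_of_lt (Nat.div_lt_of_lt_mul ?_)]
    · exact (Nat.div_pos (pow_log_le_self b hx0) (pow_pos (by omega) _)).ne'
    · rw [← pow_succ]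
      exact lt_pow_succ_log_self hb x
  have hex : ∃ e, d < e ∧ x / b ^ e % b ≠ 0 := ⟨_, le_log_of_pow_le hb hx, hlead⟩
  refine ⟨Nat.find hex, (Nat.find_spec hex).1, (Nat.find_spec hex).2, fun m hdm hm => ?_⟩
  by_contra h
  exact Nat.find_min hex hm ⟨hdm, h⟩

end Nat

theorem exists_two_pow_modEq_and_digit_eq_zero {n p : ℕ} (hp : n + 1 < p)
    (heven : 2 ∣ 2 ^ p / 10 ^ (n + 1) % 10) :
    ∃ q, 2 ^ q ≡ 2 ^ p [MOD 10 ^ (n + 1)] ∧ 2 ^ q / 10 ^ (n + 1) % 10 = 0 ∧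
      10 ^ (n + 2) ≤ 2 ^ q := by
  obtain ⟨a, ha, ha5⟩ := exists_two_pow_four_mul_five_pow n
  have hc2 : 2 ∣ a * 2 ^ (p - (n + 1)) := dvd_mul_of_dvd_right (dvd_pow_self 2 (by omega)) a
  have hc5 : ¬ 5 ∣ a * 2 ^ (p - (n + 1)) :=
    Nat.prime_five.not_dvd_mul ha5 (mt Nat.prime_five.dvd_of_dvd_pow (by norm_num))
  obtain ⟨K, hK, hK0⟩ := exists_add_mul_mod_ten_eq_zero heven hc2 hc5 (n + 2)
  have hq := two_pow_add_mul_modEq ha hp K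
  refine ⟨_, Nat.modEq_of_modEq_add_pow_mul hq,
    by rw [Nat.div_pow_mod_eq_of_modEq_add (by norm_num) hq, hK0], ?_⟩
  have hT : K * 4 ≤ K * (4 * 5 ^ n) :=
    Nat.mul_le_mul_left K (Nat.le_mul_of_pos_right 4 (pow_pos (by norm_num) n))
  calc 10 ^ (n + 2) ≤ 16 ^ (n + 2) := Nat.pow_le_pow_left (by norm_num) _
    _ = 2 ^ (4 * (n + 2)) := by rw [pow_mul]; norm_num
    _ ≤ 2 ^ (p + K * (4 * 5 ^ n)) := Nat.pow_le_pow_right (by norm_num) (by omega)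

theorem stmt_11_general (d' d p : ℕ) (hd : d' < d) (hp : d < p)
    (hzeros : ∀ m, d' < m → m < d → (2 ^ p / 10 ^ m) % 10 = 0)
    (hmax : ∀ q e, e < q → 2 ^ q ≡ 2 ^ p [MOD 10 ^ (d' + 1)] →
      (∀ m, d' < m → m < e → (2 ^ q / 10 ^ m) % 10 = 0) →
      (2 ^ q / 10 ^ e) % 10 ≠ 0 → e ≤ d) :
    (2 ^ p / 10 ^ d) % 10 % 2 = 1 := by
  by_contra hodd
  obtain ⟨n, rfl⟩ : ∃ n, d = n + 1 := ⟨d - 1, by omega⟩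
  obtain ⟨q, hlow, hdigit, hbig⟩ := exists_two_pow_modEq_and_digit_eq_zero hp (by omega)
  obtain ⟨e, hne, he, hgap⟩ := Nat.exists_next_div_pow_mod_ne_zero (by norm_num) hbig
  have he_lt : e < q := Nat.lt_of_div_pow_mod_ne_zero (by norm_num) he
    (Nat.pow_lt_pow_left (by norm_num) (by rintro rfl; norm_num at hbig))
  have hzeros' : ∀ m, d' < m → m < e → 2 ^ q / 10 ^ m % 10 = 0 := fun m hm hme => by
    rcases lt_trichotomy m (n + 1) with h | rfl | h
    · rw [Nat.div_pow_mod_eq_of_modEq hlow h]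
      exact hzeros m hm h
    · exact hdigit
    · exact hgap m h hme
  have := hmax q e he_lt (hlow.of_dvd (pow_dvd_pow 10 (by omega))) hzeros' he
  omega

/-- Greedy strategy: among all exponents `q` preserving the digits of `2^p` up to
position `d'` (i.e. agreeing mod `10^(d'+1)`) and having only zero digits strictly
between position `d'` and the position `e` of the next nonzero digit, the chosen
exponent `p` maximizes the gap, i.e. every such `e` satisfies `e ≤ d`. Then the
nonzero digit of `2^p` at position `d` (beyond the units digit) is odd. -/
theorem stmt_11 (d' d p : ℕ) (hd : d' < d) (hp : d < p)
    (hzeros : ∀ m, d' < m → m < d → (2 ^ p / 10 ^ m) % 10 = 0)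
    (hb : (2 ^ p / 10 ^ d) % 10 ≠ 0)
    (hmax : ∀ q e, e < q → 2 ^ q ≡ 2 ^ p [MOD 10 ^ (d' + 1)] →
      (∀ m, d' < m → m < e → (2 ^ q / 10 ^ m) % 10 = 0) →
      (2 ^ q / 10 ^ e) % 10 ≠ 0 → e ≤ d) :
    (2 ^ p / 10 ^ d) % 10 % 2 = 1 :=
  stmt_11_general d' d p hd hp hzeros hmax
end

section
/- Let m ≥ 1 and let p > m+2 satisfy 2^p ≡ x + 3·10^m (mod 10^(m+3)) for some x < 10^m (so the digit 3 at position m is followed by at least two zeros). Then for any k with 1 ≤ k ≤ 4 and p' = p + 4k·5^(m-1), writing 2^(p') ≡ x + b·10^m + a·10^(m+2) (mod 10^(m+3)) with 0 ≤ a, b ≤ 9, if b = 7 then a is odd. -/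
/-! Every power `2^p` with `p ≥ n` is divisible by `2^n`, and `2^n ∣ 10^n`, so any residue of `2^p`
modulo `10^n` is divisible by `2^n`. Applied to both `2^p` and `2^p'` with `n = m + 3`, the difference
`4·10^m + a·10^(m+2) = 2^(m+2)·5^m·(1 + 25a)` of the two residues must be divisible by `2^(m+3)`,
which forces `1 + 25a` to be even. -/

lemma two_pow_dvd_of_two_pow_modEq_ten_pow {n p y : ℕ} (hnp : n ≤ p)
    (h : 2 ^ p ≡ y [MOD 10 ^ n]) : 2 ^ n ∣ y :=
  (h.dvd_iff (pow_dvd_pow_of_dvd (by norm_num) n)).mp (pow_dvd_pow 2 hnp)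

lemma four_mul_ten_pow_add_eq (m a : ℕ) :
    4 * 10 ^ m + a * 10 ^ (m + 2) = 2 ^ (m + 2) * (5 ^ m * (1 + 25 * a)) := by
  rw [show (10 : ℕ) = 2 * 5 by norm_num, mul_pow, mul_pow]
  ring

lemma odd_of_two_pow_dvd_four_mul_ten_pow_add {m a : ℕ}
    (h : 2 ^ (m + 3) ∣ 4 * 10 ^ m + a * 10 ^ (m + 2)) : a % 2 = 1 := by
  rw [four_mul_ten_pow_add_eq, pow_succ] at h
  have h2 : 2 ∣ 5 ^ m * (1 + 25 * a) := Nat.dvd_of_mul_dvd_mul_left (by positivity) h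
  have hodd : 2 ∣ 1 + 25 * a :=
    (Nat.Coprime.pow_right m (by norm_num : Nat.Coprime 2 5)).dvd_of_dvd_mul_left h2
  omega

theorem stmt_13_general (m p x k a b : ℕ) (hp : m + 2 < p)
    (h3 : 2 ^ p ≡ x + 3 * 10 ^ m [MOD 10 ^ (m + 3)])
    (h' : 2 ^ (p + 4 * k * 5 ^ (m - 1)) ≡ x + b * 10 ^ m + a * 10 ^ (m + 2)
      [MOD 10 ^ (m + 3)])
    (hb7 : b = 7) :
    a % 2 = 1 := by
  subst hb7
  have hdvd3 : 2 ^ (m + 3) ∣ x + 3 * 10 ^ m := two_pow_dvd_of_two_pow_modEq_ten_pow hp h3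
  have hdvd7 : 2 ^ (m + 3) ∣ x + 3 * 10 ^ m + (4 * 10 ^ m + a * 10 ^ (m + 2)) := by
    convert two_pow_dvd_of_two_pow_modEq_ten_pow (by omega) h' using 1
    ring
  exact odd_of_two_pow_dvd_four_mul_ten_pow_add ((Nat.dvd_add_right hdvd3).mp hdvd7)

theorem stmt_13 (m p x k a b : ℕ) (hm : 1 ≤ m) (hp : m + 2 < p) (hx : x < 10 ^ m)
    (h3 : 2 ^ p ≡ x + 3 * 10 ^ m [MOD 10 ^ (m + 3)])
    (hk1 : 1 ≤ k) (hk4 : k ≤ 4) (ha : a ≤ 9) (hbd : b ≤ 9)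
    (h' : 2 ^ (p + 4 * k * 5 ^ (m - 1)) ≡ x + b * 10 ^ m + a * 10 ^ (m + 2)
      [MOD 10 ^ (m + 3)])
    (hb7 : b = 7) :
    a % 2 = 1 :=
  stmt_13_general m p x k a b hp h3 h' hb7
end

section
/- Let m ≥ 1, p > m+2, x < 10^m, with 2^p ≡ x + 3·10^m (mod 10^(m+3)). Then for any k with 1 ≤ k ≤ 4 and p' = p + 4k·5^(m-1), the digit of 2^(p') in position m cannot be 1, 5, or 9 if the digits of 2^(p') in positions m+1 and m+2 are both 0. -/
lemma key_ord (m : ℕ) (hm : 1 ≤ m) : 2 ^ (4 * 5 ^ (m - 1)) ≡ 1 [MOD 5 ^ m] := by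
  induction m with
  | zero => omega
  | succ n ih =>
    rcases Nat.eq_zero_or_pos n with hn | hn
    · subst hn; decide
    · have ih' := ih hn
      have hpow : 2 ^ (4 * 5 ^ n) = (2 ^ (4 * 5 ^ (n - 1))) ^ 5 := by
        rw [← pow_mul]
        congr 1
        rw [mul_assoc, ← pow_succ]
        congr 2
        omega
      simp only [Nat.add_sub_cancel]
      rw [hpow, Nat.modEq_iff_dvd] at *
      push_cast at *
      set c : ℤ := (2 : ℤ) ^ (4 * 5 ^ (n - 1)) with hc
      have h1 : (5 : ℤ) ^ n ∣ c - 1 := by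
        obtain ⟨t, ht⟩ := ih'
        exact ⟨-t, by linarith⟩
      have h5 : (5 : ℤ) ∣ c ^ 4 + c ^ 3 + c ^ 2 + c + 1 := by
        obtain ⟨s, hs⟩ := dvd_trans (dvd_pow_self 5 hn.ne') h1
        exact ⟨125 * s ^ 4 + 125 * s ^ 3 + 50 * s ^ 2 + 10 * s + 1, by
          rw [show c = 5 * s + 1 by linarith]; ring⟩
      have hmul : (5 : ℤ) ^ n * 5 ∣ (c - 1) * (c ^ 4 + c ^ 3 + c ^ 2 + c + 1) :=
        mul_dvd_mul h1 h5
      rw [pow_succ]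
      have heq : (1 : ℤ) - c ^ 5 = -((c - 1) * (c ^ 4 + c ^ 3 + c ^ 2 + c + 1)) := by ring
      rw [heq]
      exact hmul.neg_right

theorem stmt_14 (m p x k : ℕ) (hm : 1 ≤ m) (hp : m + 2 < p) (hx : x < 10 ^ m)
    (h3 : 2 ^ p ≡ x + 3 * 10 ^ m [MOD 10 ^ (m + 3)])
    (hk1 : 1 ≤ k) (hk4 : k ≤ 4)
    (hz1 : (2 ^ (p + 4 * k * 5 ^ (m - 1)) / 10 ^ (m + 1)) % 10 = 0)
    (hz2 : (2 ^ (p + 4 * k * 5 ^ (m - 1)) / 10 ^ (m + 2)) % 10 = 0) :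
    (2 ^ (p + 4 * k * 5 ^ (m - 1)) / 10 ^ m) % 10 ≠ 1 ∧
    (2 ^ (p + 4 * k * 5 ^ (m - 1)) / 10 ^ m) % 10 ≠ 5 ∧
    (2 ^ (p + 4 * k * 5 ^ (m - 1)) / 10 ^ m) % 10 ≠ 9 := by
  set N' : ℕ := 2 ^ (p + 4 * k * 5 ^ (m - 1)) with hN'
  set d : ℕ := (N' / 10 ^ m) % 10 with hd
  have hdlt : d < 10 := Nat.mod_lt _ (by norm_num)
  -- Step A : N' ≡ 2^p [MOD 5^m]
  have hA : N' ≡ 2 ^ p [MOD 5 ^ m] := by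
    have h1 : 2 ^ (4 * k * 5 ^ (m - 1)) ≡ 1 [MOD 5 ^ m] := by
      have h := (key_ord m hm).pow k
      rw [← pow_mul, one_pow] at h
      rw [show 4 * k * 5 ^ (m - 1) = 4 * 5 ^ (m - 1) * k by ring]
      exact h
    calc N' = 2 ^ p * 2 ^ (4 * k * 5 ^ (m - 1)) := by rw [hN', pow_add]
      _ ≡ 2 ^ p * 1 [MOD 5 ^ m] := h1.mul_left _
      _ = 2 ^ p := by ring
  -- Step B : N' ≡ 2^p [MOD 2^(m+2)]
  have hB : N' ≡ 2 ^ p [MOD 2 ^ (m + 2)] := by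
    have hd1 : 2 ^ (m + 2) ∣ 2 ^ p := pow_dvd_pow 2 (by omega)
    have hd2 : 2 ^ (m + 2) ∣ N' := pow_dvd_pow 2 (by omega)
    show N' % 2 ^ (m + 2) = 2 ^ p % 2 ^ (m + 2)
    rw [Nat.mod_eq_zero_of_dvd hd2,
      Nat.mod_eq_zero_of_dvd hd1]
  -- Step C : N' ≡ 2^p [MOD 4 * 10^m]
  have hmod : 2 ^ (m + 2) * 5 ^ m = 4 * 10 ^ m := by
    rw [show (10 : ℕ) = 2 * 5 by norm_num, mul_pow, pow_add]
    ring
  have hC : N' ≡ 2 ^ p [MOD 4 * 10 ^ m] := by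
    rw [← hmod]
    exact (Nat.modEq_and_modEq_iff_modEq_mul
      (Nat.Coprime.pow _ _ (by norm_num))).mp ⟨hB, hA⟩
  -- Step D : N' ≡ x + 3 * 10^m [MOD 4 * 10^m]
  have hdvd : (4 * 10 ^ m : ℕ) ∣ 10 ^ (m + 3) :=
    ⟨250, by rw [pow_add]; ring⟩
  have hD : N' ≡ x + 3 * 10 ^ m [MOD 4 * 10 ^ m] :=
    hC.trans (h3.of_dvd hdvd)
  -- Step E : N' % 10^(m+3) = N' % 10^m + d * 10^m
  have hE : N' % 10 ^ (m + 3) = N' % 10 ^ m + d * 10 ^ m := by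
    have e3 : N' % 10 ^ (m + 3) = N' % 10 ^ (m + 2) := by
      rw [pow_succ, Nat.mod_mul, hz2, Nat.mul_zero, Nat.add_zero]
    have e2 : N' % 10 ^ (m + 2) = N' % 10 ^ (m + 1) := by
      rw [pow_succ, Nat.mod_mul, hz1, Nat.mul_zero, Nat.add_zero]
    have e1 : N' % 10 ^ (m + 1) = N' % 10 ^ m + d * 10 ^ m := by
      rw [pow_succ, Nat.mod_mul, hd, mul_comm]
    rw [e3, e2, e1]
  -- r ≡ x + 3*10^m
  have hr : N' % 10 ^ m + d * 10 ^ m ≡ x + 3 * 10 ^ m [MOD 4 * 10 ^ m] := by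
    rw [← hE]
    exact ((Nat.mod_modEq N' (10 ^ (m + 3))).of_dvd hdvd).trans hD
  have hxeq : N' % 10 ^ m = x := by
    have h10 : (N' % 10 ^ m + d * 10 ^ m) % 10 ^ m = (x + 3 * 10 ^ m) % 10 ^ m :=
      hr.of_dvd ⟨4, by ring⟩
    rwa [Nat.add_mul_mod_self_right, Nat.add_mul_mod_self_right,
      Nat.mod_mod_of_dvd N' dvd_rfl, Nat.mod_eq_of_lt hx] at h10
  rw [hxeq] at hr
  have hcancel : d * 10 ^ m ≡ 3 * 10 ^ m [MOD 4 * 10 ^ m] :=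
    Nat.ModEq.add_left_cancel' x hr
  have hdd : ((4 * 10 ^ m : ℕ) : ℤ) ∣ ((3 : ℤ) - d) * 10 ^ m := by
    have := hcancel.dvd
    push_cast at this ⊢
    convert this using 1
    ring
  have h4 : (4 : ℤ) ∣ 3 - (d : ℤ) := by
    have hne : ((10 : ℤ) ^ m) ≠ 0 := by positivity
    push_cast at hdd
    exact (mul_dvd_mul_iff_right hne).mp hdd
  refine ⟨?_, ?_, ?_⟩ <;> intro hcon <;> rw [hcon] at h4 <;> omega
end

section
/- Let m ≥ 1, p > m+3, x < 10^m, and k with 1 ≤ k ≤ 4, p' = p + 4k·5^(m-1). Suppose 2^p ≡ x + 1·10^m + a·10^(m+2) (mod 10^(m+3)) and 2^(p') ≡ x + 9·10^m + b·10^(m+2) (mod 10^(m+3)) with 0 ≤ a, b ≤ 9. Then a ≡ b (mod 2). -/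
theorem stmt_15 (m p x k a b : ℕ) (hm : 1 ≤ m) (hp : m + 3 < p) (hx : x < 10 ^ m)
    (hk1 : 1 ≤ k) (hk4 : k ≤ 4) (ha : a ≤ 9) (hb : b ≤ 9)
    (h1 : 2 ^ p ≡ x + 1 * 10 ^ m + a * 10 ^ (m + 2) [MOD 10 ^ (m + 3)])
    (h9 : 2 ^ (p + 4 * k * 5 ^ (m - 1)) ≡ x + 9 * 10 ^ m + b * 10 ^ (m + 2)
      [MOD 10 ^ (m + 3)]) :
    a % 2 = b % 2 := by
  have hd : (2:ℕ) ^ (m + 3) ∣ 10 ^ (m + 3) :=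
    pow_dvd_pow_of_dvd (by norm_num) _
  have h0a : (2:ℕ) ^ p ≡ 0 [MOD 2 ^ (m + 3)] :=
    (Nat.modEq_zero_iff_dvd).mpr (pow_dvd_pow 2 (by omega))
  have h0b : (2:ℕ) ^ (p + 4 * k * 5 ^ (m - 1)) ≡ 0 [MOD 2 ^ (m + 3)] :=
    (Nat.modEq_zero_iff_dvd).mpr (pow_dvd_pow 2 (by omega))
  have hA : x + 1 * 10 ^ m + a * 10 ^ (m + 2) ≡ 0 [MOD 2 ^ (m + 3)] :=
    ((h1.of_dvd hd).symm).trans h0a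
  have hB : x + 9 * 10 ^ m + b * 10 ^ (m + 2) ≡ 0 [MOD 2 ^ (m + 3)] :=
    ((h9.of_dvd hd).symm).trans h0b
  have key : x + 1 * 10 ^ m + a * 10 ^ (m + 2) ≡
      x + 9 * 10 ^ m + b * 10 ^ (m + 2) [MOD 2 ^ (m + 3)] := hA.trans hB.symm
  have e10 : ∀ n, (10:ℕ) ^ n = 2 ^ n * 5 ^ n := fun n => by
    rw [show (10:ℕ) = 2 * 5 by norm_num, mul_pow]
  have e1 : x + 1 * 10 ^ m + a * 10 ^ (m + 2) = x + 2 ^ m * (5 ^ m * (1 + 100 * a)) := by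
    rw [e10 m, e10 (m + 2), pow_add, pow_add]; ring
  have e2 : x + 9 * 10 ^ m + b * 10 ^ (m + 2) = x + 2 ^ m * (5 ^ m * (9 + 100 * b)) := by
    rw [e10 m, e10 (m + 2), pow_add, pow_add]; ring
  have e3 : (2:ℕ) ^ (m + 3) = 2 ^ m * 8 := by rw [pow_add]; norm_num
  rw [e1, e2, e3] at key
  have key2 : 2 ^ m * (5 ^ m * (1 + 100 * a)) ≡ 2 ^ m * (5 ^ m * (9 + 100 * b))
      [MOD 2 ^ m * 8] := (Nat.ModEq.add_left_cancel' x key)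
  have key3 : 5 ^ m * (1 + 100 * a) ≡ 5 ^ m * (9 + 100 * b) [MOD 8] :=
    Nat.ModEq.mul_left_cancel' (by positivity) key2
  have hcop : Nat.gcd 8 (5 ^ m) = 1 := Nat.Coprime.pow_right m (by decide)
  have key4 : 1 + 100 * a ≡ 9 + 100 * b [MOD 8] :=
    key3.cancel_left_of_coprime hcop
  have := key4
  unfold Nat.ModEq at this
  omega
end

section
/- Let m ≥ 1, p > m+4, x < 10^m, and k with 1 ≤ k ≤ 4, p' = p + 4k·5^(m-1). Suppose 2^p ≡ x + 1·10^m + a·10^(m+3) (mod 10^(m+4)) and 2^(p') ≡ x + 9·10^m + b·10^(m+3) (mod 10^(m+4)) with 0 ≤ a, b ≤ 9. Then a and b have opposite parities: a + b is odd. -/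
theorem stmt_16 (m p x k a b : ℕ) (hm : 1 ≤ m) (hp : m + 4 < p) (hx : x < 10 ^ m)
    (hk1 : 1 ≤ k) (hk4 : k ≤ 4) (ha : a ≤ 9) (hb : b ≤ 9)
    (h1 : 2 ^ p ≡ x + 1 * 10 ^ m + a * 10 ^ (m + 3) [MOD 10 ^ (m + 4)])
    (h9 : 2 ^ (p + 4 * k * 5 ^ (m - 1)) ≡ x + 9 * 10 ^ m + b * 10 ^ (m + 3)
      [MOD 10 ^ (m + 4)]) :
    (a + b) % 2 = 1 := by
  have hd : (2:ℕ)^(m+4) ∣ 10^(m+4) := by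
    have h10 : (10:ℕ)^(m+4) = 2^(m+4) * 5^(m+4) := by rw [← mul_pow]; norm_num
    exact h10 ▸ dvd_mul_right _ _
  have h0p : (2:ℕ)^p ≡ 0 [MOD 2^(m+4)] :=
    (Nat.modEq_zero_iff_dvd).mpr (pow_dvd_pow 2 hp.le)
  have h0p' : (2:ℕ)^(p + 4 * k * 5 ^ (m - 1)) ≡ 0 [MOD 2^(m+4)] :=
    (Nat.modEq_zero_iff_dvd).mpr (pow_dvd_pow 2 (le_trans hp.le (Nat.le_add_right _ _)))
  have key : (x + 1 * 10 ^ m + a * 10 ^ (m + 3)) ≡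
      (x + 9 * 10 ^ m + b * 10 ^ (m + 3)) [MOD 2^(m+4)] :=
    (((h1.of_dvd hd).symm.trans h0p).trans (((h9.of_dvd hd).symm.trans h0p').symm))
  have keyZ : ((x:ℤ) + 1 * 10 ^ m + a * 10 ^ (m + 3)) ≡
      ((x:ℤ) + 9 * 10 ^ m + b * 10 ^ (m + 3)) [ZMOD 2^(m+4)] := by
    have := Int.natCast_modEq_iff.mpr key
    push_cast at this
    exact this
  have hdvd : (2:ℤ)^(m+4) ∣ 2^(m+3) * (5^m * (1 + 125 * ((b:ℤ) - a))) := by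
    have := keyZ.dvd
    have heq : ((x:ℤ) + 9 * 10 ^ m + b * 10 ^ (m + 3)) -
        ((x:ℤ) + 1 * 10 ^ m + a * 10 ^ (m + 3)) =
        2^(m+3) * (5^m * (1 + 125 * ((b:ℤ) - a))) := by
      have h1 : (10:ℤ)^m = 2^m * 5^m := by rw [← mul_pow]; norm_num
      have h2 : (10:ℤ)^(m+3) = 2^(m+3) * 5^(m+3) := by rw [← mul_pow]; norm_num
      rw [h1, h2, pow_add, pow_add]; ring
    rwa [heq] at this
  have hcancel : (2:ℤ) ∣ 5^m * (1 + 125 * ((b:ℤ) - a)) := by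
    have h2 : (2:ℤ)^(m+4) = 2^(m+3) * 2 := by ring
    rw [h2] at hdvd
    exact (mul_dvd_mul_iff_left (by positivity : (2:ℤ)^(m+3) ≠ 0)).mp hdvd
  have h5 : ¬ (2:ℤ) ∣ 5^m := by
    intro h
    have := Int.Prime.dvd_pow' (p := 2) (by norm_num) h
    norm_num at this
  have hfin : (2:ℤ) ∣ 1 + 125 * ((b:ℤ) - a) :=
    ((Int.Prime.dvd_mul' (by norm_num) hcancel).resolve_left h5)
  omega
end
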